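/- arXiv:1307.0265 — 4 statements merged into one kernel-verified Lean document; each statement's English description precedes it below -/
import Mathlib

section
/- There is a bijection between the set of ideals B on {0,...,n} containing the identity ideal, and the set of relations on {0,...,n} that are reflexive, symmetric, and have the interpolation property. -/
/-!
An ideal `B` containing `≤` is determined by the pairs `(j, i)` with `i < j` that it contains.
Its symmetric part `B ⊓ flip B` records exactly these pairs together with the diagonal, and
`B` is recovered as `(≤) ⊔ flip R`. Under this correspondence, closure of `B` under shrinking
`j` and growing `i` is the interpolation property of the symmetric relation.
-/

section

variable {α : Type*} {B R : α → α → Prop}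

def symmPart (B : α → α → Prop) (i j : α) : Prop :=
  B i j ∧ B j i

theorem symmPart_comm (i j : α) : symmPart B i j → symmPart B j i :=
  And.symm

def IsIdeal [Preorder α] (B : α → α → Prop) : Prop :=
  ∀ q j i p, q ≤ j → B j i → i ≤ p → B q p

def HasInterpolation [Preorder α] (R : α → α → Prop) : Prop :=
  ∀ i j k, i ≤ j → j ≤ k → R i k → R i j ∧ R j k

def idealOfSymm [Preorder α] (R : α → α → Prop) (j i : α) : Prop :=
  j ≤ i ∨ R i j

theorem symmPart_self [Preorder α] (hid : ∀ j i, j ≤ i → B j i) (i : α) : symmPart B i i :=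
  ⟨hid i i le_rfl, hid i i le_rfl⟩

theorem hasInterpolation_symmPart [Preorder α] (hB : IsIdeal B) (hid : ∀ j i, j ≤ i → B j i) :
    HasInterpolation (symmPart B) := by
  rintro i j k hij hjk ⟨-, hki⟩
  exact ⟨⟨hid i j hij, hB j k i i hjk hki le_rfl⟩, ⟨hid j k hjk, hB k k i j le_rfl hki hij⟩⟩

theorem isIdeal_idealOfSymm [LinearOrder α] (hR : HasInterpolation R) :
    IsIdeal (idealOfSymm R) := by
  rintro q j i p hqj (hji | hij) hip
  · exact .inl (hqj.trans (hji.trans hip))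
  · refine or_iff_not_imp_left.2 fun hqp => ?_
    have hpq : p ≤ q := (not_le.1 hqp).le
    -- `i ≤ p ≤ q ≤ j`: interpolate `R i j` first at `q`, then at `p`.
    exact (hR i p q hip hpq (hR i q j (hip.trans hpq) hqj hij).1).2

theorem idealOfSymm_symmPart [LinearOrder α] (hid : ∀ j i, j ≤ i → B j i) :
    idealOfSymm (symmPart B) = B := by
  ext j i
  refine ⟨fun h => h.elim (hid j i) And.right, fun hji => ?_⟩
  rcases le_total j i with hle | hle
  · exact .inl hle
  · exact .inr ⟨hid i j hle, hji⟩

theorem symmPart_idealOfSymm [PartialOrder α] (hrefl : ∀ i, R i i) (hsymm : ∀ i j, R i j → R j i) :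
    symmPart (idealOfSymm R) = R := by
  ext i j
  refine ⟨?_, fun h => ⟨.inr (hsymm i j h), .inr h⟩⟩
  rintro ⟨hij | hji, hji' | hij'⟩
  · exact le_antisymm hij hji' ▸ hrefl i
  · exact hij'
  · exact hsymm j i hji
  · exact hij'

variable (α) in
def idealEquivSymm [LinearOrder α] :
    {B : α → α → Prop // IsIdeal B ∧ ∀ j i, j ≤ i → B j i} ≃
      {R : α → α → Prop // (∀ i, R i i) ∧ (∀ i j, R i j → R j i) ∧ HasInterpolation R} where
  toFun B := ⟨symmPart B.1, symmPart_self B.2.2, symmPart_comm,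
    hasInterpolation_symmPart B.2.1 B.2.2⟩
  invFun R := ⟨idealOfSymm R.1, isIdeal_idealOfSymm R.2.2.2, fun _ _ => .inl⟩
  left_inv B := Subtype.ext (idealOfSymm_symmPart B.2.2)
  right_inv R := Subtype.ext (symmPart_idealOfSymm R.2.1 R.2.2.1)

end

/-- bijection between ideals containing the identity ideal on [n]
and reflexive symmetric interpolating relations on [n]. -/
theorem stmt2 (n : ℕ) :
    Nonempty
      ({B : Fin (n+1) → Fin (n+1) → Prop //
          (∀ q j i p : Fin (n+1), q ≤ j → B j i → i ≤ p → B q p) ∧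
          (∀ j i : Fin (n+1), j ≤ i → B j i)} ≃
       {R : Fin (n+1) → Fin (n+1) → Prop //
          (∀ i, R i i) ∧ (∀ i j, R i j → R j i) ∧
          (∀ i j k, i ≤ j → j ≤ k → R i k → R i j ∧ R j k)}) :=
  ⟨idealEquivSymm (Fin (n+1))⟩
end

section
/- In a skew-monoidal category, if all the components of the associativity constraint α, the left unit constraint λ, and the right unit constraint ρ are isomorphisms, then the underlying category with this data is a monoidal category. -/
open CategoryTheory

/-- A skew-monoidal structure on a category: a unit object, a tensor which is
functorial in each variable jointly, natural constraints α, λ, ρ (not assumed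
invertible) and Mac Lane's five axioms. -/
structure SkewMonoidalStruct (C : Type*) [Category C] where
  tensorObj : C → C → C
  tensorHom : ∀ {a b x y : C}, (a ⟶ b) → (x ⟶ y) → (tensorObj a x ⟶ tensorObj b y)
  tensor_id : ∀ a b : C, tensorHom (𝟙 a) (𝟙 b) = 𝟙 (tensorObj a b)
  tensor_comp : ∀ {a b c x y z : C} (f : a ⟶ b) (g : b ⟶ c) (h : x ⟶ y) (k : y ⟶ z),
    tensorHom (f ≫ g) (h ≫ k) = tensorHom f h ≫ tensorHom g k
  unit : C
  α : ∀ a b c : C, tensorObj (tensorObj a b) c ⟶ tensorObj a (tensorObj b c)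
  α_natural : ∀ {a a' b b' c c' : C} (f : a ⟶ a') (g : b ⟶ b') (h : c ⟶ c'),
    tensorHom (tensorHom f g) h ≫ α a' b' c' = α a b c ≫ tensorHom f (tensorHom g h)
  lam : ∀ a : C, tensorObj unit a ⟶ a
  lam_natural : ∀ {a a' : C} (f : a ⟶ a'),
    tensorHom (𝟙 unit) f ≫ lam a' = lam a ≫ f
  rho : ∀ a : C, a ⟶ tensorObj a unit
  rho_natural : ∀ {a a' : C} (f : a ⟶ a'),
    f ≫ rho a' = rho a ≫ tensorHom f (𝟙 unit)
  pentagon : ∀ a b c d : C,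
    tensorHom (α a b c) (𝟙 d) ≫ α a (tensorObj b c) d ≫ tensorHom (𝟙 a) (α b c d)
      = α (tensorObj a b) c d ≫ α a b (tensorObj c d)
  ax2 : ∀ a b : C,
    tensorHom (rho a) (𝟙 b) ≫ α a unit b ≫ tensorHom (𝟙 a) (lam b)
      = 𝟙 (tensorObj a b)
  ax3 : ∀ a b : C,
    α unit a b ≫ lam (tensorObj a b) = tensorHom (lam a) (𝟙 b)
  ax4 : ∀ a b : C,
    rho (tensorObj a b) ≫ α a b unit = tensorHom (𝟙 a) (rho b)
  ax5 : rho unit ≫ lam unit = 𝟙 unit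

/-- a skew-monoidal category all of whose constraints α, λ, ρ are
isomorphisms is a monoidal category (with the same tensor, unit and
constraints). -/
theorem stmt12 {C : Type*} [Category C] (S : SkewMonoidalStruct C)
    (hα : ∀ a b c : C, IsIso (S.α a b c))
    (hlam : ∀ a : C, IsIso (S.lam a))
    (hrho : ∀ a : C, IsIso (S.rho a)) :
    ∃ M : MonoidalCategory C,
      @MonoidalCategoryStruct.tensorObj C _ M.toMonoidalCategoryStruct = S.tensorObj ∧
      @MonoidalCategoryStruct.tensorUnit C _ M.toMonoidalCategoryStruct = S.unit ∧
      HEq (fun a b c : C => (@MonoidalCategoryStruct.associator C _ M.toMonoidalCategoryStruct a b c).hom) S.α ∧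
      HEq (fun a : C => (@MonoidalCategoryStruct.leftUnitor C _ M.toMonoidalCategoryStruct a).hom) S.lam ∧
      HEq (fun a : C => (@MonoidalCategoryStruct.rightUnitor C _ M.toMonoidalCategoryStruct a).inv) S.rho := by
  haveI := hα; haveI := hlam; haveI := hrho
  letI MS : MonoidalCategoryStruct C := {
    tensorObj := S.tensorObj
    whiskerLeft := fun X _ _ f => S.tensorHom (𝟙 X) f
    whiskerRight := fun f Y => S.tensorHom f (𝟙 Y)
    tensorHom := S.tensorHom
    tensorUnit := S.unit
    associator := fun a b c => asIso (S.α a b c)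
    leftUnitor := fun a => asIso (S.lam a)
    rightUnitor := fun a => (asIso (S.rho a)).symm }
  have tri : ∀ X Y : C,
      S.α X S.unit Y ≫ S.tensorHom (𝟙 X) (S.lam Y) = S.tensorHom (inv (S.rho X)) (𝟙 Y) := by
    intro X Y
    haveI : IsIso (S.tensorHom (S.rho X) (𝟙 Y)) :=
      ⟨S.tensorHom (inv (S.rho X)) (𝟙 Y),
       by rw [← S.tensor_comp, IsIso.hom_inv_id, Category.comp_id, S.tensor_id],
       by rw [← S.tensor_comp, IsIso.inv_hom_id, Category.comp_id, S.tensor_id]⟩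
    rw [← cancel_epi (S.tensorHom (S.rho X) (𝟙 Y)), S.ax2,
      ← S.tensor_comp, IsIso.hom_inv_id, Category.comp_id, S.tensor_id]
  have runat : ∀ {X Y : C} (f : X ⟶ Y),
      S.tensorHom f (𝟙 S.unit) ≫ inv (S.rho Y) = inv (S.rho X) ≫ f := by
    intro X Y f
    rw [IsIso.comp_inv_eq, Category.assoc, IsIso.eq_inv_comp, S.rho_natural]
  letI M : MonoidalCategory C := MonoidalCategory.ofTensorHom
    (id_tensorHom_id := S.tensor_id)
    (id_tensorHom := fun _ => fun {_ _} _ => rfl)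
    (tensorHom_id := fun {_ _} _ _ => rfl)
    (tensorHom_comp_tensorHom := fun f₁ f₂ g₁ g₂ => (S.tensor_comp f₁ g₁ f₂ g₂).symm)
    (associator_naturality := fun f g h => S.α_natural f g h)
    (leftUnitor_naturality := fun f => S.lam_natural f)
    (rightUnitor_naturality := fun f => runat f)
    (pentagon := S.pentagon)
    (triangle := tri)
  exact ⟨M, rfl, rfl, HEq.rfl, HEq.rfl, HEq.rfl⟩
end

section
/- For each n, normal lax functors from the linear order [n] to the one-object 2-category Σ2 (delooping of the monoidal poset (2, ∨, 0)) are in bijection with reflexive symmetric relations on {0,...,n} having the interpolation property, via F ↦ {(i,j) : F(i ≤ j) = 0 or F(j ≤ i) = 0}. -/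
/-! A normal lax functor `F` into `Σ2` is determined by its zero locus `{(i, j) : F (i ≤ j) = 0}`,
which the laxity inequality `F(i ≤ j) ∨ F(j ≤ k) ≤ F(i ≤ k)` makes closed under interpolation.
In a linear order every pair is comparable in exactly one direction (or equal, where `F` vanishes
by normality), so symmetrising the zero locus loses no information. -/

namespace LaxToSigmaTwo

variable (α : Type*) [LinearOrder α]

/-- `true` and `false` stand for the 1-cells `1` and `0` of `Σ2`. -/
abbrev NormalLax : Type _ :=
  {F : ∀ i j : α, i ≤ j → Bool //
    (∀ i (h : i ≤ i), F i i h = false) ∧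
    (∀ i j k (hij : i ≤ j) (hjk : j ≤ k), (F i j hij || F j k hjk) ≤ F i k (hij.trans hjk))}

abbrev InterpolatingRel : Type _ :=
  {R : α → α → Prop //
    (∀ i, R i i) ∧ (∀ i j, R i j → R j i) ∧
    (∀ i j k, i ≤ j → j ≤ k → R i k → R i j ∧ R j k)}

variable {α}

def zeroRel (F : ∀ i j : α, i ≤ j → Bool) (i j : α) : Prop :=
  (∃ h : i ≤ j, F i j h = false) ∨ (∃ h : j ≤ i, F j i h = false)

open Classical in
noncomputable def ofRel (R : α → α → Prop) (i j : α) (_ : i ≤ j) : Bool :=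
  decide (¬ R i j)

theorem ofRel_eq_false_iff (R : α → α → Prop) {i j : α} (h : i ≤ j) :
    ofRel R i j h = false ↔ R i j := by
  simp [ofRel]

theorem NormalLax.eq_false_of_comp_eq_false (F : NormalLax α) {i j k : α} (hij : i ≤ j)
    (hjk : j ≤ k) (hik : F.1 i k (hij.trans hjk) = false) :
    F.1 i j hij = false ∧ F.1 j k hjk = false := by
  have h := F.2.2 i j k hij hjk
  rw [hik] at h
  exact Bool.or_eq_false_iff.1 (Bool.eq_false_of_le_false h)

theorem zeroRel_interpolates (F : NormalLax α) {i j k : α} (hij : i ≤ j) (hjk : j ≤ k)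
    (hik : zeroRel F.1 i k) : zeroRel F.1 i j ∧ zeroRel F.1 j k := by
  rcases hik with ⟨_, hF⟩ | ⟨hki, _⟩
  · obtain ⟨hFij, hFjk⟩ := F.eq_false_of_comp_eq_false hij hjk hF
    exact ⟨.inl ⟨hij, hFij⟩, .inl ⟨hjk, hFjk⟩⟩
  · obtain rfl : j = i := le_antisymm (hjk.trans hki) hij
    obtain rfl : k = j := le_antisymm hki hjk
    exact ⟨.inl ⟨hij, F.2.1 _ hij⟩, .inl ⟨hjk, F.2.1 _ hjk⟩⟩

def NormalLax.toInterpolatingRel (F : NormalLax α) : InterpolatingRel α :=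
  ⟨zeroRel F.1, fun i => .inl ⟨le_rfl, F.2.1 i le_rfl⟩, fun _ _ h => h.symm,
    fun _ _ _ hij hjk => zeroRel_interpolates F hij hjk⟩

noncomputable def InterpolatingRel.toNormalLax (R : InterpolatingRel α) : NormalLax α := by
  refine ⟨ofRel R.1, fun i h => (ofRel_eq_false_iff R.1 h).2 (R.2.1 i), ?_⟩
  intro i j k hij hjk
  by_cases hik : R.1 i k
  · obtain ⟨hRij, hRjk⟩ := R.2.2.2 i j k hij hjk hik
    simp [(ofRel_eq_false_iff R.1 hij).2 hRij, (ofRel_eq_false_iff R.1 hjk).2 hRjk]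
  · simp [ofRel, hik]

theorem ofRel_zeroRel (F : NormalLax α) : ofRel (zeroRel F.1) = F.1 := by
  funext i j h
  suffices zeroRel F.1 i j ↔ F.1 i j h = false by
    cases hF : F.1 i j h <;> simp_all [ofRel]
  refine ⟨fun hR => ?_, fun hF => .inl ⟨h, hF⟩⟩
  rcases hR with ⟨_, hF⟩ | ⟨hji, _⟩
  · exact hF
  · obtain rfl : j = i := le_antisymm hji h
    exact F.2.1 _ h

theorem zeroRel_ofRel (R : InterpolatingRel α) : zeroRel (ofRel R.1) = R.1 := by
  funext i j
  simp only [zeroRel, ofRel_eq_false_iff, exists_prop, eq_iff_iff]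
  refine ⟨fun h => h.elim (·.2) (R.2.2.1 j i ·.2), fun hR => ?_⟩
  rcases le_total i j with h | h
  · exact .inl ⟨h, hR⟩
  · exact .inr ⟨h, R.2.2.1 i j hR⟩

noncomputable def normalLaxEquiv : NormalLax α ≃ InterpolatingRel α where
  toFun := NormalLax.toInterpolatingRel
  invFun := InterpolatingRel.toNormalLax
  left_inv F := Subtype.ext (ofRel_zeroRel F)
  right_inv R := Subtype.ext (zeroRel_ofRel R)

end LaxToSigmaTwo

open LaxToSigmaTwo in
/-- normal lax functors [n] → Σ2 are in bijection with reflexive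
symmetric interpolating relations on {0,...,n}, via
F ↦ {(i,j) : F(i ≤ j) = 0 or F(j ≤ i) = 0}. -/
theorem stmt15 (n : ℕ) :
    ∃ e : {F : ∀ i j : Fin (n+1), i ≤ j → Bool //
            (∀ i (h : i ≤ i), F i i h = false) ∧
            (∀ i j k (hij : i ≤ j) (hjk : j ≤ k),
              (F i j hij || F j k hjk) ≤ F i k (hij.trans hjk))} ≃
          {R : Fin (n+1) → Fin (n+1) → Prop //
            (∀ i, R i i) ∧ (∀ i j, R i j → R j i) ∧
            (∀ i j k, i ≤ j → j ≤ k → R i k → R i j ∧ R j k)},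
      ∀ F, (e F).val = fun i j =>
        (∃ h : i ≤ j, F.val i j h = false) ∨ (∃ h : j ≤ i, F.val j i h = false) :=
  ⟨normalLaxEquiv, fun _ => rfl⟩
end

section
/- For every n ≥ 3, every reflexive symmetric interpolating relation on {0,...,n} is uniquely determined as the filler of its boundary: if R and R' are two such relations which agree on every subset obtained by restricting along each of the n+1 face inclusions δ_i : [n-1] → [n] (i.e., ξ⁻¹(R) = ξ⁻¹(R') for every injective monotone ξ : [n-1] → [n]), then R = R'. (Equivalently, the Catalan simplicial set is 2-coskeletal, stated at dimensions ≥ 3.) -/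
theorem Fin.eq_of_forall_comp_succAbove_eq {α : Type*} {n : ℕ} (hn : 2 ≤ n)
    {f g : Fin (n + 1) → Fin (n + 1) → α}
    (h : ∀ k : Fin (n + 1), (fun p q => f (k.succAbove p) (k.succAbove q)) =
      fun p q => g (k.succAbove p) (k.succAbove q)) :
    f = g := by
  funext i j
  obtain ⟨k, hki, hkj⟩ := Fin.exists_ne_and_ne_of_two_lt i j (by omega)
  obtain ⟨p, rfl⟩ := Fin.exists_succAbove_eq hki.symm
  obtain ⟨q, rfl⟩ := Fin.exists_succAbove_eq hkj.symm
  exact congrFun (congrFun (h k) p) q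

theorem stmt19_general (n : ℕ) (hn : 3 ≤ n)
    (R R' : Fin (n+1) → Fin (n+1) → Prop)
    (h : ∀ ξ : Fin n → Fin (n+1), Monotone ξ → Function.Injective ξ →
      (fun p q => R (ξ p) (ξ q)) = (fun p q => R' (ξ p) (ξ q))) :
    R = R' :=
  Fin.eq_of_forall_comp_succAbove_eq (by omega) fun k =>
    h k.succAbove (Fin.strictMono_succAbove k).monotone Fin.succAbove_right_injective

/-- for n ≥ 3, a reflexive symmetric interpolating relation on
{0,...,n} is determined by its restrictions along all injective monotone maps
[n-1] → [n] (the face maps): the Catalan simplicial set is 2-coskeletal in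
dimensions ≥ 3. -/
theorem stmt19 (n : ℕ) (hn : 3 ≤ n)
    (R R' : Fin (n+1) → Fin (n+1) → Prop)
    (hrefl : ∀ i, R i i) (hsymm : ∀ i j, R i j → R j i)
    (hint : ∀ i j k : Fin (n+1), i ≤ j → j ≤ k → R i k → R i j ∧ R j k)
    (hrefl' : ∀ i, R' i i) (hsymm' : ∀ i j, R' i j → R' j i)
    (hint' : ∀ i j k : Fin (n+1), i ≤ j → j ≤ k → R' i k → R' i j ∧ R' j k)
    (h : ∀ ξ : Fin n → Fin (n+1), Monotone ξ → Function.Injective ξ →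
      (fun p q => R (ξ p) (ξ q)) = (fun p q => R' (ξ p) (ξ q))) :
    R = R' :=
  stmt19_general n hn R R' h
end
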